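/- arXiv:2403.17168 — 2 statements merged into one kernel-verified Lean document; each statement's English description precedes it below -/
import Mathlib

section
/- There exists a real constant ξ > 0 with the following property. Let ℓ, u, v be positive integers with u ≤ v ≤ 3 and ℓ ≥ (42v)^v, and let r₁,…,r_u and s₁,…,s_v be positive integers with r₁+⋯+r_u = ℓ, s₁+⋯+s_v = ℓ, and gcd(r₁,…,r_u,s₁,…,s_v) = 1. Set S := Σ_{i=1}^{u} Σ_{j=1}^{v} (r_i + s_j − 2·gcd(r_i,s_j)). Then S ≥ ℓ(v − u + ξ). -/
/-!
Since `∑ r = ∑ s = ℓ`, the sum equals `ℓ (v - u) + 2 ∑ᵢ ∑ⱼ (sⱼ - gcd(rᵢ, sⱼ))`. Every term of the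
last sum is nonnegative, and it is at least `sⱼ / 2` when `sⱼ ∤ rᵢ`; so `ξ = 1/6` works as soon as
some `sⱼ ≥ ℓ/6` fails to divide some `rᵢ`. Otherwise every `sⱼ ≥ ℓ/6` divides `ℓ`, and then
`ℓ = ∑ sⱼ` with at most three terms forces the terms to be `ℓ`, `ℓ/2 + ℓ/2`, `ℓ/3 + ℓ/3 + ℓ/3`,
`ℓ/2 + ℓ/4 + ℓ/4` or `ℓ/2 + ℓ/3 + ℓ/6`. In each case the smallest term is at least `ℓ/6 > 1` and
divides all the others, hence all the `rᵢ` as well, contradicting the gcd condition.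
-/

theorem Nat.two_mul_gcd_le_of_not_dvd {m n : ℕ} (hn : 0 < n) (h : ¬n ∣ m) :
    2 * Nat.gcd m n ≤ n := by
  obtain ⟨k, hk⟩ := Nat.gcd_dvd_right m n
  have hk1 : k ≠ 1 := by
    rintro rfl
    exact h (by rw [hk, mul_one]; exact Nat.gcd_dvd_left m n)
  have hk0 : k ≠ 0 := by rintro rfl; omega
  calc 2 * Nat.gcd m n ≤ Nat.gcd m n * k := by rw [mul_comm]; gcongr; omega
    _ = n := hk.symm

theorem exists_large_common_dvd_of_antitone {a b c ℓ : ℕ} (hba : b ≤ a) (hcb : c ≤ b)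
    (hsum : a + b + c = ℓ) (ha : a ∣ ℓ) (hb : ℓ ≤ 4 * b → b ∣ ℓ) :
    ∃ g, ℓ ≤ 6 * g ∧ g ∣ a ∧ g ∣ b ∧ g ∣ c := by
  rcases Nat.eq_zero_or_pos ℓ with rfl | hℓ
  · exact ⟨0, le_rfl, zero_dvd_iff.2 (by omega), zero_dvd_iff.2 (by omega),
      zero_dvd_iff.2 (by omega)⟩
  obtain ⟨k, hk⟩ := ha
  have hk3 : k ≤ 3 := Nat.le_of_mul_le_mul_left (c := a) (by omega) (by omega)
  have hk0 : 0 < k := Nat.pos_of_ne_zero (by rintro rfl; omega)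
  interval_cases k
  · exact ⟨a, by omega, dvd_rfl, ⟨0, by omega⟩, ⟨0, by omega⟩⟩
  · obtain ⟨m, hm⟩ := hb (by omega)
    have hm4 : m ≤ 4 := Nat.le_of_mul_le_mul_left (c := b) (by omega) (by omega)
    have hm2 : 2 ≤ m := by
      by_contra! h
      interval_cases m <;> omega
    interval_cases m
    · exact ⟨b, by omega, ⟨1, by omega⟩, dvd_rfl, ⟨0, by omega⟩⟩
    · exact ⟨c, by omega, ⟨3, by omega⟩, ⟨2, by omega⟩, dvd_rfl⟩
    · exact ⟨b, by omega, ⟨2, by omega⟩, dvd_rfl, ⟨1, by omega⟩⟩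
  · exact ⟨a, by omega, dvd_rfl, ⟨1, by omega⟩, ⟨1, by omega⟩⟩

theorem exists_large_common_dvd_of_add_add {a b c ℓ : ℕ} (hsum : a + b + c = ℓ)
    (ha : ℓ ≤ 6 * a → a ∣ ℓ) (hb : ℓ ≤ 6 * b → b ∣ ℓ) (hc : ℓ ≤ 6 * c → c ∣ ℓ) :
    ∃ g, ℓ ≤ 6 * g ∧ g ∣ a ∧ g ∣ b ∧ g ∣ c := by
  wlog hba : b ≤ a generalizing a b c
  · obtain ⟨g, hg, hgb, hga, hgc⟩ := this (by omega) hb ha hc (by omega)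
    exact ⟨g, hg, hga, hgb, hgc⟩
  wlog hca : c ≤ a generalizing a b c
  · obtain ⟨g, hg, hgc, hgb, hga⟩ :=
      this (a := c) (c := a) (by omega) hc hb ha (by omega) (by omega)
    exact ⟨g, hg, hga, hgb, hgc⟩
  wlog hcb : c ≤ b generalizing b c
  · obtain ⟨g, hg, hga, hgc, hgb⟩ :=
      this (b := c) (c := b) (by omega) hc hb (by omega) (by omega) (by omega)
    exact ⟨g, hg, hga, hgb, hgc⟩
  exact exists_large_common_dvd_of_antitone hba hcb hsum (ha (by omega)) fun h => hb (by omega)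

theorem exists_large_common_dvd {v ℓ : ℕ} (s : Fin v → ℕ) (hv : v ≤ 3) (hsum : ∑ j, s j = ℓ)
    (hdvd : ∀ j, ℓ ≤ 6 * s j → s j ∣ ℓ) : ∃ g, ℓ ≤ 6 * g ∧ ∀ j, g ∣ s j := by
  have h0 : ℓ ≤ 6 * 0 → 0 ∣ ℓ := fun h => zero_dvd_iff.2 (by omega)
  interval_cases v
  · exact ⟨0, by simp at hsum; omega, finZeroElim⟩
  · obtain ⟨g, hg, h₀, -, -⟩ :=
      exists_large_common_dvd_of_add_add (by simpa using hsum) (hdvd 0) h0 h0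
    exact ⟨g, hg, Fin.forall_fin_one.2 h₀⟩
  · obtain ⟨g, hg, h₀, h₁, -⟩ := exists_large_common_dvd_of_add_add
      (by simpa [Fin.sum_univ_two] using hsum) (hdvd 0) (hdvd 1) h0
    exact ⟨g, hg, Fin.forall_fin_two.2 ⟨h₀, h₁⟩⟩
  · obtain ⟨g, hg, h₀, h₁, h₂⟩ := exists_large_common_dvd_of_add_add
      (by simpa [Fin.sum_univ_three] using hsum) (hdvd 0) (hdvd 1) (hdvd 2)
    exact ⟨g, hg, Fin.forall_fin_succ.2 ⟨h₀, Fin.forall_fin_two.2 ⟨h₁, h₂⟩⟩⟩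

theorem exists_large_not_dvd_of_gcd_eq_one {u v ℓ : ℕ} (r : Fin u → ℕ) (s : Fin v → ℕ)
    (hv₀ : 0 < v) (hv : v ≤ 3) (hℓ : 6 < ℓ) (hs : ∀ j, 0 < s j) (hrsum : ∑ i, r i = ℓ)
    (hssum : ∑ j, s j = ℓ) (hgcd : Nat.gcd (Finset.univ.gcd r) (Finset.univ.gcd s) = 1) :
    ∃ i j, ¬s j ∣ r i ∧ ℓ ≤ 6 * s j := by
  by_contra! h
  have hlarge : ∀ j, ℓ ≤ 6 * s j → ∀ i, s j ∣ r i := fun j hj i =>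
    by_contra fun hn => (h i j hn).not_ge hj
  obtain ⟨g, hg, hgs⟩ := exists_large_common_dvd s hv hssum fun j hj =>
    hrsum ▸ Finset.dvd_sum fun i _ => hlarge j hj i
  let j₀ : Fin v := ⟨0, hv₀⟩
  have hgr : ∀ i, g ∣ r i := fun i =>
    (hgs j₀).trans (hlarge j₀ (hg.trans (by gcongr; exact Nat.le_of_dvd (hs j₀) (hgs j₀))) i)
  have hg1 : g ∣ 1 :=
    hgcd ▸ Nat.dvd_gcd (Finset.dvd_gcd fun i _ => hgr i) (Finset.dvd_gcd fun j _ => hgs j)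
  have := Nat.le_of_dvd one_pos hg1
  omega

theorem half_le_sum_sum_sub_gcd {ι κ : Type*} [Fintype ι] [Fintype κ] (r : ι → ℕ) (s : κ → ℕ)
    (hs : ∀ j, 0 < s j) {i : ι} {j : κ} (hndvd : ¬s j ∣ r i) :
    (s j : ℝ) / 2 ≤ ∑ i, ∑ j, ((s j : ℝ) - Nat.gcd (r i) (s j)) := by
  have hterm : ∀ i j, 0 ≤ (s j : ℝ) - Nat.gcd (r i) (s j) := fun i j =>
    sub_nonneg.2 (by exact_mod_cast Nat.gcd_le_right _ (hs j))
  calc (s j : ℝ) / 2 ≤ (s j : ℝ) - Nat.gcd (r i) (s j) := by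
        have : (2 * Nat.gcd (r i) (s j) : ℝ) ≤ s j := by
          exact_mod_cast Nat.two_mul_gcd_le_of_not_dvd (hs j) hndvd
        linarith
    _ ≤ ∑ j', ((s j' : ℝ) - Nat.gcd (r i) (s j')) :=
      Finset.single_le_sum (fun j' _ => hterm i j') (Finset.mem_univ j)
    _ ≤ ∑ i', ∑ j', ((s j' : ℝ) - Nat.gcd (r i') (s j')) :=
      Finset.single_le_sum (fun i' _ => Finset.sum_nonneg fun j' _ => hterm i' j')
        (Finset.mem_univ i)

theorem sum_sum_add_sub_two_mul {ι κ : Type*} [Fintype ι] [Fintype κ] {ℓ : ℝ} (r : ι → ℝ)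
    (s : κ → ℝ) (t : ι → κ → ℝ) (hr : ∑ i, r i = ℓ) (hs : ∑ j, s j = ℓ) :
    ∑ i, ∑ j, (r i + s j - 2 * t i j) =
      ℓ * (Fintype.card κ - Fintype.card ι) + 2 * ∑ i, ∑ j, (s j - t i j) := by
  simp only [Finset.sum_sub_distrib, Finset.sum_add_distrib, ← Finset.mul_sum, Finset.sum_const,
    Finset.card_univ, nsmul_eq_mul, hr, hs]
  ring

/-- **Lemma 2.13(2)**: there is an absolute constant `ξ > 0` such that, whenever
`u ≤ v ≤ 3`, `ℓ ≥ (42v)^v`, the positive integers `r₁,…,r_u` and `s₁,…,s_v` each sum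
to `ℓ`, and the gcd of all of `r₁,…,r_u,s₁,…,s_v` is `1`, the sum
`S := Σᵢ Σⱼ (rᵢ + sⱼ − 2·gcd(rᵢ,sⱼ))` satisfies `S ≥ ℓ(v − u + ξ)`. -/
theorem statement6 :
    ∃ ξ : ℝ, 0 < ξ ∧
      ∀ (ℓ u v : ℕ) (r : Fin u → ℕ) (s : Fin v → ℕ),
        0 < u → 0 < v → u ≤ v → v ≤ 3 → (42 * v) ^ v ≤ ℓ →
        (∀ i, 0 < r i) → (∀ j, 0 < s j) →
        (∑ i, r i = ℓ) → (∑ j, s j = ℓ) →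
        Nat.gcd (Finset.univ.gcd r) (Finset.univ.gcd s) = 1 →
        (ℓ : ℝ) * ((v : ℝ) - (u : ℝ) + ξ) ≤
          ∑ i, ∑ j, ((r i : ℝ) + (s j : ℝ) - 2 * (Nat.gcd (r i) (s j) : ℝ)) := by
  refine ⟨1 / 6, by norm_num, ?_⟩
  intro ℓ u v r s _ hv _ hv3 hℓ _ hs hrsum hssum hgcd
  have hℓ6 : 6 < ℓ := calc
    6 < 42 * v := by omega
    _ ≤ (42 * v) ^ v := Nat.le_self_pow hv.ne' _
    _ ≤ ℓ := hℓ
  obtain ⟨i, j, hndvd, hlarge⟩ :=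
    exists_large_not_dvd_of_gcd_eq_one r s hv hv3 hℓ6 hs hrsum hssum hgcd
  have hdefect := half_le_sum_sum_sub_gcd r s hs hndvd
  have hlarge' : (ℓ : ℝ) ≤ 6 * s j := by exact_mod_cast hlarge
  rw [sum_sum_add_sub_two_mul (ℓ := ℓ) (fun i => (r i : ℝ)) (fun j => (s j : ℝ))
    (fun i j => (Nat.gcd (r i) (s j) : ℝ)) (by exact_mod_cast hrsum) (by exact_mod_cast hssum),
    Fintype.card_fin, Fintype.card_fin]
  linarith
end

section
/- For every integer ℓ ≥ 9 with ℓ ≡ 2 (mod 3) there exist x₁, x₂, x₃ ∈ Sym(ℓ) such that x₁·x₂·x₃ = 1, the subgroup generated by x₁, x₂, x₃ contains Alt(ℓ), x₁ is a product of (ℓ−2)/3 pairwise disjoint 3-cycles with exactly two fixed points (cycle type [1²,3^{(ℓ−2)/3}]), and each of x₂ and x₃ is a product of one 2-cycle and (ℓ−2)/3 pairwise disjoint 3-cycles, with no fixed points (cycle type [2,3^{(ℓ−2)/3}]). -/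
/-!
Write `ℓ = 3m + 5` and label the points `0, …, 3m+4`. Take `x₁` to be the product of the 3-cycles
on the triples `{3k+2, 3k+3, 3k+4}`, `x₂ = (0 3m+4) ρ₂` and `x₃ = (1 3) ρ₃`, where `ρ₂, ρ₃` have
order 3 and fix exactly the two points of the transposition in front of them. All three are given
by explicit formulas on `ℕ`, so `x₁ x₂ x₃ = 1` and the fixed points and orders are finite case
analyses.

An element of order 3 with exactly two fixed points on `3k + 2` points has cycle type `3^k`, which
gives the cycle types. Let `G = ⟨x₁, x₂, x₃⟩`. Then `x₃³ = (1 3)`, and conjugating by `x₂` gives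
`(1 2)`. The relation "`(a b)` lies in `G`" is `G`-invariant, so `(1 g(1)) ∈ G` for every `g ∈ G`.
Moreover `G` is transitive, since `x₁` and `x₂` move `1 ↦ 2 ↦ ⋯ ↦ 3m+4 ↦ 0`. Hence `G` contains
every transposition, and `G = Sym(ℓ)`.
-/

open Equiv Finset

namespace Equiv.Perm

variable {α : Type*} [DecidableEq α]

theorem swap_apply_cases (a b x : α) :
    x = a ∧ swap a b x = b ∨ x = b ∧ swap a b x = a ∨ x ≠ a ∧ x ≠ b ∧ swap a b x = x := by
  rw [swap_apply_def]
  split_ifs with ha hb <;> simp [*]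

theorem swap_apply_apply_mem {H : Subgroup (Perm α)} {g : Perm α} (hg : g ∈ H) {a b : α}
    (h : swap a b ∈ H) : swap (g a) (g b) ∈ H := by
  rw [swap_apply_apply]
  exact mul_mem (mul_mem hg h) (inv_mem hg)

theorem swap_apply_mem_closure {S : Set (Perm α)} {a : α}
    (hS : ∀ s ∈ S, swap a (s a) ∈ Subgroup.closure S) {g : Perm α}
    (hg : g ∈ Subgroup.closure S) : swap a (g a) ∈ Subgroup.closure S := by
  induction hg using Subgroup.closure_induction with
  | mem s hs => exact hS s hs
  | one => rw [one_apply, swap_self]; exact one_mem _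
  | mul g h hg hh ihg ihh =>
    exact SubmonoidClass.swap_mem_trans _ ihg (swap_apply_apply_mem hg ihh)
  | inv g hg ih =>
    have h := swap_apply_apply_mem (inv_mem hg) ih
    rwa [← Perm.mul_apply, inv_mul_cancel, one_apply, swap_comm] at h

theorem closure_eq_top_of_swap_apply_mem [Finite α] {S : Set (Perm α)} (a : α)
    (hS : ∀ s ∈ S, swap a (s a) ∈ Subgroup.closure S)
    (htrans : ∀ b, ∃ g ∈ Subgroup.closure S, g a = b) : Subgroup.closure S = ⊤ := by
  have hswap : ∀ b, swap a b ∈ Subgroup.closure S := fun b => by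
    obtain ⟨g, hg, rfl⟩ := htrans b
    exact swap_apply_mem_closure hS hg
  rw [eq_top_iff, ← closure_isSwap, Subgroup.closure_le]
  rintro _ ⟨b, c, -, rfl⟩
  exact SubmonoidClass.swap_mem_trans _ (swap_comm a b ▸ hswap b) (hswap c)

theorem disjoint_swap_of_apply_eq {ρ : Perm α} {a b : α} (ha : ρ a = a) (hb : ρ b = b) :
    Disjoint (swap a b) ρ := by
  intro x
  by_cases hxa : x = a
  · exact Or.inr (hxa ▸ ha)
  by_cases hxb : x = b
  · exact Or.inr (hxb ▸ hb)
  exact Or.inl (swap_apply_of_ne_of_ne hxa hxb)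

theorem swap_mul_pow_three {ρ : Perm α} {a b : α} (ha : ρ a = a) (hb : ρ b = b)
    (hρ : ρ ^ 3 = 1) : (swap a b * ρ) ^ 3 = swap a b := by
  rw [(disjoint_swap_of_apply_eq ha hb).commute.mul_pow, hρ, mul_one, pow_succ, sq,
    swap_mul_self, one_mul]

variable [Fintype α]

theorem cycleType_swap_mul {ρ : Perm α} {a b : α} (hab : a ≠ b) (ha : ρ a = a)
    (hb : ρ b = b) : (swap a b * ρ).cycleType = 2 ::ₘ ρ.cycleType := by
  rw [(disjoint_swap_of_apply_eq ha hb).cycleType_mul,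
    isSwap_iff_cycleType.mp ⟨a, b, hab, rfl⟩, Multiset.singleton_add]

theorem cycleType_eq_replicate_of_pow_prime_eq_one {σ : Perm α} {p k : ℕ} [Fact p.Prime]
    (hσ : σ ^ p = 1) (hcard : #σ.support = k * p) : σ.cycleType = Multiset.replicate k p := by
  have h := cycleType_of_pow_prime_eq_one hσ
  have hsum := σ.sum_cycleType
  rw [h, Multiset.sum_replicate, smul_eq_mul, hcard] at hsum
  rw [h, Nat.eq_of_mul_eq_mul_right (Fact.out : p.Prime).pos hsum]

theorem card_support_eq_card_sub_two {σ : Perm α} {a b : α} (hab : a ≠ b)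
    (h : ∀ x, σ x = x ↔ x = a ∨ x = b) : #σ.support = Fintype.card α - 2 := by
  have : σ.support = {a, b}ᶜ := by
    ext x
    simp [h]
  rw [this, card_compl, card_pair hab]

theorem cycleType_eq_replicate_three {σ : Perm α} {a b : α} {k : ℕ}
    (hcard : Fintype.card α = 3 * k + 2) (hab : a ≠ b) (hσ : σ ^ 3 = 1)
    (hfix : ∀ x, σ x = x ↔ x = a ∨ x = b) : σ.cycleType = Multiset.replicate k 3 := by
  refine cycleType_eq_replicate_of_pow_prime_eq_one hσ ?_
  rw [card_support_eq_card_sub_two hab hfix, hcard]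
  omega

end Equiv.Perm

namespace Fin

variable {n : ℕ} {f : ℕ → ℕ} {hmaps : Set.MapsTo f (Set.Iio n) (Set.Iio n)}
  {hinj : Set.InjOn f (Set.Iio n)}

variable (f hmaps hinj) in
noncomputable def permOfInjOn : Perm (Fin n) :=
  Equiv.ofBijective (fun x => ⟨f x, hmaps x.2⟩)
    (Finite.injective_iff_bijective.mp fun x y h => Fin.ext (hinj x.2 y.2 (congrArg Fin.val h)))

@[simp]
theorem val_permOfInjOn_apply (x : Fin n) : (permOfInjOn f hmaps hinj x : ℕ) = f x := rfl

theorem permOfInjOn_pow_eq_one {k : ℕ} (h : ∀ v < n, f^[k] v = v) :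
    permOfInjOn f hmaps hinj ^ k = 1 := by
  have hpow : ∀ j (x : Fin n), ((permOfInjOn f hmaps hinj ^ j) x : ℕ) = f^[j] x := by
    intro j x
    induction j with
    | zero => rfl
    | succ j ih => rw [pow_succ', Perm.mul_apply, val_permOfInjOn_apply, ih,
        Function.iterate_succ_apply']
  ext x
  rw [hpow, h x x.2, Perm.one_apply]

theorem val_swap_apply (a b x : Fin n) : (swap a b x : ℕ) = swap (a : ℕ) b x :=
  (Fin.val_injective.swap_apply a b x).symm

end Fin

namespace ProductOneTriple

variable (m : ℕ)

/-- `(2 3 4)(5 6 7)(8 9 10) ⋯`, fixing `0` and `1` -/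
def f₁ (v : ℕ) : ℕ := if v < 2 then v else if v % 3 = 1 then v - 2 else v + 1

/-- `(1 2 3)(4 5 6) ⋯ (3m+1 3m+2 3m+3)`, fixing `0` and `3m+4` -/
def f₂ (v : ℕ) : ℕ := if v = 0 ∨ v = 3 * m + 4 then v else if v % 3 = 0 then v - 2 else v + 1

/-- `(0 3m+4 3m+2)(2 6 4)(5 9 7) ⋯ (3m-1 3m+3 3m+1)`, fixing `1` and `3` -/
def f₃ (v : ℕ) : ℕ :=
  if v = 1 ∨ v = 3 then v
  else if v = 0 then 3 * m + 4 else if v = 3 * m + 4 then 3 * m + 2 else if v = 3 * m + 2 then 0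
  else if v % 3 = 2 then v + 4 else v - 2

theorem f₁_cases (v : ℕ) :
    v < 2 ∧ f₁ v = v ∨ 2 ≤ v ∧ v % 3 = 1 ∧ f₁ v = v - 2 ∨ 2 ≤ v ∧ v % 3 ≠ 1 ∧ f₁ v = v + 1 := by
  unfold f₁
  split_ifs <;> omega

theorem f₂_cases (v : ℕ) :
    (v = 0 ∨ v = 3 * m + 4) ∧ f₂ m v = v ∨
      v ≠ 0 ∧ v ≠ 3 * m + 4 ∧ v % 3 = 0 ∧ f₂ m v = v - 2 ∨
      v ≠ 0 ∧ v ≠ 3 * m + 4 ∧ v % 3 ≠ 0 ∧ f₂ m v = v + 1 := by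
  unfold f₂
  split_ifs <;> omega

theorem f₃_cases (v : ℕ) :
    (v = 1 ∨ v = 3) ∧ f₃ m v = v ∨ v = 0 ∧ f₃ m v = 3 * m + 4 ∨
      v = 3 * m + 4 ∧ f₃ m v = 3 * m + 2 ∨ v = 3 * m + 2 ∧ f₃ m v = 0 ∨
      v ≠ 1 ∧ v ≠ 3 ∧ v ≠ 0 ∧ v ≠ 3 * m + 4 ∧ v ≠ 3 * m + 2 ∧
        (v % 3 = 2 ∧ f₃ m v = v + 4 ∨ v % 3 ≠ 2 ∧ f₃ m v = v - 2) := by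
  unfold f₃
  split_ifs <;> omega

theorem f₁_mapsTo : Set.MapsTo f₁ (Set.Iio (3 * m + 5)) (Set.Iio (3 * m + 5)) := by
  intro v (hv : v < _)
  have := f₁_cases v
  show f₁ v < _
  omega

theorem f₁_injective : Function.Injective f₁ := by
  intro u v h
  have := f₁_cases u
  have := f₁_cases v
  omega

theorem f₂_mapsTo : Set.MapsTo (f₂ m) (Set.Iio (3 * m + 5)) (Set.Iio (3 * m + 5)) := by
  intro v (hv : v < _)
  have := f₂_cases m v
  show f₂ m v < _
  omega

theorem f₂_injOn : Set.InjOn (f₂ m) (Set.Iio (3 * m + 5)) := by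
  intro u (hu : u < _) v (hv : v < _) h
  have := f₂_cases m u
  have := f₂_cases m v
  omega

theorem f₃_mapsTo : Set.MapsTo (f₃ m) (Set.Iio (3 * m + 5)) (Set.Iio (3 * m + 5)) := by
  intro v (hv : v < _)
  have := f₃_cases m v
  show f₃ m v < _
  omega

theorem f₃_injOn : Set.InjOn (f₃ m) (Set.Iio (3 * m + 5)) := by
  intro u (hu : u < _) v (hv : v < _) h
  have := f₃_cases m u
  have := f₃_cases m v
  omega

noncomputable def x₁ : Perm (Fin (3 * m + 5)) := Fin.permOfInjOn f₁ (f₁_mapsTo m) f₁_injective.injOn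

noncomputable def ρ₂ : Perm (Fin (3 * m + 5)) :=
  Fin.permOfInjOn (f₂ m) (f₂_mapsTo m) (f₂_injOn m)

noncomputable def ρ₃ : Perm (Fin (3 * m + 5)) :=
  Fin.permOfInjOn (f₃ m) (f₃_mapsTo m) (f₃_injOn m)

noncomputable def x₂ : Perm (Fin (3 * m + 5)) := swap ⟨0, by omega⟩ ⟨3 * m + 4, by omega⟩ * ρ₂ m

noncomputable def x₃ : Perm (Fin (3 * m + 5)) := swap ⟨1, by omega⟩ ⟨3, by omega⟩ * ρ₃ m

theorem val_x₁_apply (x : Fin (3 * m + 5)) : (x₁ m x : ℕ) = f₁ x := rfl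

theorem val_x₂_apply (x : Fin (3 * m + 5)) : (x₂ m x : ℕ) = swap 0 (3 * m + 4) (f₂ m x) := by
  rw [x₂, Perm.mul_apply, Fin.val_swap_apply]
  rfl

theorem val_x₃_apply (x : Fin (3 * m + 5)) : (x₃ m x : ℕ) = swap 1 3 (f₃ m x) := by
  rw [x₃, Perm.mul_apply, Fin.val_swap_apply]
  rfl

theorem mul_mul_eq_one : x₁ m * x₂ m * x₃ m = 1 := by
  ext x
  rw [Perm.mul_apply, Perm.mul_apply, val_x₁_apply, val_x₂_apply, val_x₃_apply, Perm.one_apply]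
  have := f₃_cases m x
  have := Perm.swap_apply_cases 1 3 (f₃ m x)
  have := f₂_cases m (swap 1 3 (f₃ m x))
  have := Perm.swap_apply_cases 0 (3 * m + 4) (f₂ m (swap 1 3 (f₃ m x)))
  have := f₁_cases (swap 0 (3 * m + 4) (f₂ m (swap 1 3 (f₃ m x))))
  have := x.2
  omega

theorem x₁_pow_three : x₁ m ^ 3 = 1 :=
  Fin.permOfInjOn_pow_eq_one fun v _ => by
    simp only [Function.iterate_succ_apply', Function.iterate_zero_apply]
    have := f₁_cases v
    have := f₁_cases (f₁ v)
    have := f₁_cases (f₁ (f₁ v))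
    omega

theorem ρ₂_pow_three : ρ₂ m ^ 3 = 1 :=
  Fin.permOfInjOn_pow_eq_one fun v _ => by
    simp only [Function.iterate_succ_apply', Function.iterate_zero_apply]
    have := f₂_cases m v
    have := f₂_cases m (f₂ m v)
    have := f₂_cases m (f₂ m (f₂ m v))
    omega

theorem ρ₃_pow_three : ρ₃ m ^ 3 = 1 :=
  Fin.permOfInjOn_pow_eq_one fun v _ => by
    simp only [Function.iterate_succ_apply', Function.iterate_zero_apply]
    have := f₃_cases m v
    have := f₃_cases m (f₃ m v)
    have := f₃_cases m (f₃ m (f₃ m v))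
    omega

theorem x₁_apply_eq_self_iff (x : Fin (3 * m + 5)) :
    x₁ m x = x ↔ x = ⟨0, by omega⟩ ∨ x = ⟨1, by omega⟩ := by
  simp only [x₁, Fin.ext_iff, Fin.val_permOfInjOn_apply]
  have := f₁_cases x
  omega

theorem ρ₂_apply_eq_self_iff (x : Fin (3 * m + 5)) :
    ρ₂ m x = x ↔ x = ⟨0, by omega⟩ ∨ x = ⟨3 * m + 4, by omega⟩ := by
  simp only [ρ₂, Fin.ext_iff, Fin.val_permOfInjOn_apply]
  have := f₂_cases m x
  omega

theorem ρ₃_apply_eq_self_iff (x : Fin (3 * m + 5)) :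
    ρ₃ m x = x ↔ x = ⟨1, by omega⟩ ∨ x = ⟨3, by omega⟩ := by
  simp only [ρ₃, Fin.ext_iff, Fin.val_permOfInjOn_apply]
  have := f₃_cases m x
  omega

theorem card_fin : Fintype.card (Fin (3 * m + 5)) = 3 * (m + 1) + 2 := by
  rw [Fintype.card_fin]
  ring

theorem cycleType_x₁ : (x₁ m).cycleType = Multiset.replicate (m + 1) 3 :=
  Perm.cycleType_eq_replicate_three (card_fin m) (by simp) (x₁_pow_three m) (x₁_apply_eq_self_iff m)

theorem cycleType_x₂ : (x₂ m).cycleType = 2 ::ₘ Multiset.replicate (m + 1) 3 := by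
  rw [x₂, Perm.cycleType_swap_mul (by simp) ((ρ₂_apply_eq_self_iff m _).mpr (.inl rfl))
    ((ρ₂_apply_eq_self_iff m _).mpr (.inr rfl)), Perm.cycleType_eq_replicate_three (card_fin m)
    (by simp) (ρ₂_pow_three m) (ρ₂_apply_eq_self_iff m)]

theorem cycleType_x₃ : (x₃ m).cycleType = 2 ::ₘ Multiset.replicate (m + 1) 3 := by
  rw [x₃, Perm.cycleType_swap_mul (by simp) ((ρ₃_apply_eq_self_iff m _).mpr (.inl rfl))
    ((ρ₃_apply_eq_self_iff m _).mpr (.inr rfl)), Perm.cycleType_eq_replicate_three (card_fin m)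
    (by simp) (ρ₃_pow_three m) (ρ₃_apply_eq_self_iff m)]

theorem x₃_pow_three : x₃ m ^ 3 = swap ⟨1, by omega⟩ ⟨3, by omega⟩ :=
  Perm.swap_mul_pow_three ((ρ₃_apply_eq_self_iff m _).mpr (.inl rfl))
    ((ρ₃_apply_eq_self_iff m _).mpr (.inr rfl)) (ρ₃_pow_three m)

theorem exists_mem_closure_apply_eq (b : Fin (3 * m + 5)) :
    ∃ g ∈ Subgroup.closure {x₁ m, x₂ m, x₃ m}, g ⟨1, by omega⟩ = b := by
  have hx₁ : x₁ m ∈ Subgroup.closure {x₁ m, x₂ m, x₃ m} := Subgroup.subset_closure (by simp)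
  have hx₂ : x₂ m ∈ Subgroup.closure {x₁ m, x₂ m, x₃ m} := Subgroup.subset_closure (by simp)
  have hpath : ∀ v, 1 ≤ v → v < 3 * m + 5 →
      ∃ g ∈ Subgroup.closure {x₁ m, x₂ m, x₃ m}, (g ⟨1, by omega⟩ : ℕ) = v := by
    intro v hv
    induction v, hv using Nat.le_induction with
    | base => exact fun _ => ⟨1, one_mem _, rfl⟩
    | succ v _ ih =>
      intro hv
      obtain ⟨g, hg, hgv⟩ := ih (by omega)
      by_cases h : v % 3 = 0
      · refine ⟨x₁ m * g, mul_mem hx₁ hg, ?_⟩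
        rw [Perm.mul_apply, val_x₁_apply, hgv]
        have := f₁_cases v
        omega
      · refine ⟨x₂ m * g, mul_mem hx₂ hg, ?_⟩
        rw [Perm.mul_apply, val_x₂_apply, hgv]
        have := f₂_cases m v
        have := Perm.swap_apply_cases 0 (3 * m + 4) (f₂ m v)
        omega
  by_cases hb : (b : ℕ) = 0
  · obtain ⟨g, hg, hgv⟩ := hpath (3 * m + 4) (by omega) (by omega)
    refine ⟨x₂ m * g, mul_mem hx₂ hg, Fin.ext ?_⟩
    rw [Perm.mul_apply, val_x₂_apply, hgv, hb]
    have := f₂_cases m (3 * m + 4)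
    have := Perm.swap_apply_cases 0 (3 * m + 4) (f₂ m (3 * m + 4))
    omega
  · obtain ⟨g, hg, hgv⟩ := hpath b (by omega) b.2
    exact ⟨g, hg, Fin.ext hgv⟩

theorem closure_eq_top : Subgroup.closure {x₁ m, x₂ m, x₃ m} = ⊤ := by
  have hx₂ : x₂ m ∈ Subgroup.closure {x₁ m, x₂ m, x₃ m} := Subgroup.subset_closure (by simp)
  have h₁₃ : swap ⟨1, by omega⟩ ⟨3, by omega⟩ ∈ Subgroup.closure {x₁ m, x₂ m, x₃ m} :=
    x₃_pow_three m ▸ pow_mem (Subgroup.subset_closure (by simp)) 3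
  refine Perm.closure_eq_top_of_swap_apply_mem _ ?_ (exists_mem_closure_apply_eq m)
  simp only [Set.mem_insert_iff, Set.mem_singleton_iff, forall_eq_or_imp, forall_eq]
  refine ⟨?_, ?_, ?_⟩
  · rw [show x₁ m ⟨1, _⟩ = ⟨1, by omega⟩ from rfl, swap_self]
    exact one_mem _
  · have h := Perm.swap_apply_apply_mem hx₂ h₁₃
    have h₁ : x₂ m ⟨1, by omega⟩ = ⟨2, by omega⟩ :=
      Fin.ext (by simp [val_x₂_apply, f₂, swap_apply_def])
    have h₃ : x₂ m ⟨3, by omega⟩ = ⟨1, by omega⟩ :=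
      Fin.ext (by simp [val_x₂_apply, f₂, swap_apply_def])
    rwa [h₁, h₃, swap_comm] at h
  · rwa [show x₃ m ⟨1, _⟩ = ⟨3, by omega⟩ from Fin.ext (by simp [val_x₃_apply, f₃])]

end ProductOneTriple

/-- **Lemma 9.2, case F2.2**: for every `ℓ ≥ 9` with `ℓ ≡ 2 (mod 3)` there is a
product-one triple `x₁·x₂·x₃ = 1` in `Sym(ℓ)` generating a subgroup containing
`Alt(ℓ)`, where `x₁` has cycle type `[1²,3^{(ℓ−2)/3}]` (two fixed points) and
`x₂, x₃` both have cycle type `[2,3^{(ℓ−2)/3}]` (no fixed points). -/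
theorem statement17 (ℓ : ℕ) (hℓ : 9 ≤ ℓ) (h3 : ℓ % 3 = 2) :
    ∃ x₁ x₂ x₃ : Equiv.Perm (Fin ℓ),
      x₁ * x₂ * x₃ = 1 ∧
      alternatingGroup (Fin ℓ) ≤ Subgroup.closure {x₁, x₂, x₃} ∧
      x₁.cycleType = Multiset.replicate ((ℓ - 2) / 3) 3 ∧
      x₂.cycleType = 2 ::ₘ Multiset.replicate ((ℓ - 2) / 3) 3 ∧
      x₃.cycleType = 2 ::ₘ Multiset.replicate ((ℓ - 2) / 3) 3 := by
  obtain ⟨m, rfl⟩ : ∃ m, ℓ = 3 * m + 5 := ⟨(ℓ - 5) / 3, by omega⟩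
  rw [show (3 * m + 5 - 2) / 3 = m + 1 by omega]
  open ProductOneTriple in
  exact ⟨x₁ m, x₂ m, x₃ m, mul_mul_eq_one m, closure_eq_top m ▸ le_top, cycleType_x₁ m,
    cycleType_x₂ m, cycleType_x₃ m⟩
end
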